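/- When λ̂_i = λ_i for all i (with λ_i > 0), distinct affine corrected ratings are uncorrelated: for j < i, E[r̂_i r̂_j] = E[r̂_i] E[r̂_j] = p². -/

import Mathlib

open MeasureTheory ProbabilityTheory Finset Filter

/-- Sample mean of the first `n` ratings (ratings are indexed from 1). -/
noncomputable def pbar {Ω : Type*} (r : ℕ → Ω → ℝ) (n : ℕ) (ω : Ω) : ℝ :=
  (∑ i ∈ Finset.Icc 1 n, r i ω) / n

/-- σ-algebra generated by the first `n` ratings. -/
def ratingsAlg {Ω : Type*} (r : ℕ → Ω → ℝ) (n : ℕ) : MeasurableSpace Ω :=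
  ⨆ i ∈ Finset.Icc 1 n, MeasurableSpace.comap (r i) (inferInstance : MeasurableSpace ℝ)

/-- The bandwagon rating process of Xie et al., as used in the paper. -/
structure Bandwagon {Ω : Type*} [MeasurableSpace Ω] (μ : Measure Ω)
    (p : ℝ) (lam : ℕ → ℝ) (r : ℕ → Ω → ℝ) : Prop where
  prob : IsProbabilityMeasure μ
  hp : 0 < p ∧ p < 1
  hlam1 : lam 1 = 1
  hlam_nonneg : ∀ n, 1 ≤ n → 0 ≤ lam n
  hlam_mono : ∀ n, 2 ≤ n → lam n ≤ lam (n - 1)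
  hmeas : ∀ n, Measurable (r n)
  hbin : ∀ n, 1 ≤ n → ∀ ω, r n ω = 0 ∨ r n ω = 1
  hfirst : ∫ ω, r 1 ω ∂μ = p
  hcond : ∀ n, 2 ≤ n →
    μ[r n | ratingsAlg r (n - 1)] =ᵐ[μ]
      fun ω => lam n * p + (1 - lam n) * pbar r (n - 1) ω

/-- Affine-corrected rating `r̂ᵢ`. -/
noncomputable def rhat {Ω : Type*} (r : ℕ → Ω → ℝ) (lam : ℕ → ℝ) (i : ℕ) (ω : Ω) : ℝ :=
  (r i ω - (1 - lam i) * pbar r (i - 1) ω) / lam i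

/-!
Given the first `i - 1` ratings, the bandwagon term `(1 - λᵢ) p̄ᵢ₋₁` of `rᵢ` is known and is
subtracted exactly, so `r̂ᵢ` has conditional mean `p`. Since `r̂ⱼ` (`j < i`) is a bounded function
of those ratings, the tower property gives `E[r̂ᵢ r̂ⱼ] = E[r̂ⱼ E[r̂ᵢ | r₁, …, rᵢ₋₁]] = p E[r̂ⱼ] = p²`.
-/

theorem integral_mul_eq_of_condExp_eq_const {Ω : Type*} {m mΩ : MeasurableSpace Ω}
    {μ : Measure Ω} [IsFiniteMeasure μ] (hm : m ≤ mΩ) {f g : Ω → ℝ} {c C : ℝ}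
    (hf : Integrable f μ) (hfc : μ[f | m] =ᵐ[μ] fun _ => c)
    (hg : StronglyMeasurable[m] g) (hgC : ∀ᵐ ω ∂μ, ‖g ω‖ ≤ C) :
    ∫ ω, f ω * g ω ∂μ = c * ∫ ω, g ω ∂μ := by
  have hpull : μ[g * f | m] =ᵐ[μ] fun ω => g ω * c := by
    filter_upwards [condExp_stronglyMeasurable_mul_of_bound hm hg hf C hgC, hfc] with ω h1 h2
    rw [h1, Pi.mul_apply, h2]
  calc ∫ ω, f ω * g ω ∂μ = ∫ ω, (μ[g * f | m]) ω ∂μ := by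
        simp_rw [integral_condExp hm, Pi.mul_apply, mul_comm]
    _ = c * ∫ ω, g ω ∂μ := by
        rw [integral_congr_ae hpull, integral_mul_const, mul_comm]

theorem integrable_of_forall_mem_Icc {Ω : Type*} [MeasurableSpace Ω] {μ : Measure Ω}
    [IsFiniteMeasure μ] {f : Ω → ℝ} (hf : Measurable f) (hf01 : ∀ ω, f ω ∈ Set.Icc 0 1) :
    Integrable f μ :=
  .of_bound hf.aestronglyMeasurable 1 (.of_forall fun ω => by
    rw [Real.norm_of_nonneg (hf01 ω).1]; exact (hf01 ω).2)

section Ratings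

variable {Ω : Type*} {r : ℕ → Ω → ℝ}

theorem pbar_mem_Icc {ω : Ω} (h : ∀ k, 1 ≤ k → r k ω ∈ Set.Icc 0 1) (n : ℕ) :
    pbar r n ω ∈ Set.Icc 0 1 := by
  have hmem : ∀ k ∈ Icc 1 n, r k ω ∈ Set.Icc 0 1 := fun k hk => h k (mem_Icc.mp hk).1
  have hsum_le : ∑ k ∈ Icc 1 n, r k ω ≤ n := by
    calc ∑ k ∈ Icc 1 n, r k ω ≤ ∑ _k ∈ Icc 1 n, (1 : ℝ) := sum_le_sum fun k hk => (hmem k hk).2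
      _ = n := by simp
  exact ⟨div_nonneg (sum_nonneg fun k hk => (hmem k hk).1) n.cast_nonneg,
    div_le_one_of_le₀ hsum_le n.cast_nonneg⟩

theorem measurable_ratingsAlg {k n : ℕ} (hk : k ∈ Icc 1 n) : Measurable[ratingsAlg r n] (r k) :=
  Measurable.of_comap_le (le_biSup (fun i => MeasurableSpace.comap (r i) inferInstance) hk)

theorem measurable_pbar_ratingsAlg {k n : ℕ} (hkn : k ≤ n) :
    Measurable[ratingsAlg r n] (pbar r k) :=
  (Finset.measurable_sum _ fun _ hi => measurable_ratingsAlg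
    (Icc_subset_Icc le_rfl hkn hi)).div_const _

theorem measurable_rhat_ratingsAlg (lam : ℕ → ℝ) {j n : ℕ} (hj : 1 ≤ j) (hjn : j ≤ n) :
    Measurable[ratingsAlg r n] (rhat r lam j) :=
  ((measurable_ratingsAlg (mem_Icc.mpr ⟨hj, hjn⟩)).sub
    ((measurable_pbar_ratingsAlg (j.sub_le 1 |>.trans hjn)).const_mul _)).div_const _

theorem ratingsAlg_le [MeasurableSpace Ω] (hr : ∀ n, Measurable (r n)) (n : ℕ) :
    ratingsAlg r n ≤ ‹MeasurableSpace Ω› :=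
  iSup₂_le fun k _ => (hr k).comap_le

end Ratings

namespace Bandwagon

variable {Ω : Type*} [MeasurableSpace Ω] {μ : Measure Ω} {p : ℝ} {lam : ℕ → ℝ}
  {r : ℕ → Ω → ℝ}

theorem rating_mem_Icc (hbw : Bandwagon μ p lam r) {n : ℕ} (hn : 1 ≤ n) (ω : Ω) :
    r n ω ∈ Set.Icc 0 1 := by
  rcases hbw.hbin n hn ω with h | h <;> simp [h]

theorem lam_le_one (hbw : Bandwagon μ p lam r) {n : ℕ} (hn : 1 ≤ n) : lam n ≤ 1 := by
  induction n, hn using Nat.le_induction with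
  | base => exact hbw.hlam1.le
  | succ k hk ih => simpa using (hbw.hlam_mono (k + 1) (by omega)).trans ih

theorem abs_rhat_le (hbw : Bandwagon μ p lam r) {n : ℕ} (hn : 1 ≤ n) (ω : Ω) :
    |rhat r lam n ω| ≤ (lam n)⁻¹ := by
  obtain ⟨hr0, hr1⟩ := hbw.rating_mem_Icc hn ω
  obtain ⟨hq0, hq1⟩ := pbar_mem_Icc (fun k hk => hbw.rating_mem_Icc hk ω) (n - 1)
  have hlam0 := hbw.hlam_nonneg n hn
  have hlam1 := hbw.lam_le_one hn
  have hnum : |r n ω - (1 - lam n) * pbar r (n - 1) ω| ≤ 1 := by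
    simpa using abs_sub_le_of_le_of_le hr0 hr1 (mul_nonneg (by linarith) hq0)
      (mul_le_one₀ (by linarith) hq0 hq1)
  rw [rhat, abs_div, abs_of_nonneg hlam0, ← one_div]
  exact div_le_div_of_nonneg_right hnum hlam0

theorem integrable_rating (hbw : Bandwagon μ p lam r) {n : ℕ} (hn : 1 ≤ n) :
    Integrable (r n) μ :=
  have := hbw.prob
  integrable_of_forall_mem_Icc (hbw.hmeas n) (hbw.rating_mem_Icc hn)

theorem integrable_pbar (hbw : Bandwagon μ p lam r) (n : ℕ) : Integrable (pbar r n) μ :=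
  have := hbw.prob
  integrable_of_forall_mem_Icc
    ((measurable_pbar_ratingsAlg le_rfl).mono (ratingsAlg_le hbw.hmeas n) le_rfl)
    fun ω => pbar_mem_Icc (fun _ hk => hbw.rating_mem_Icc hk ω) n

theorem integrable_rhat (hbw : Bandwagon μ p lam r) {n : ℕ} (hn : 1 ≤ n) :
    Integrable (rhat r lam n) μ :=
  have := hbw.prob
  .of_bound ((measurable_rhat_ratingsAlg lam hn le_rfl).mono (ratingsAlg_le hbw.hmeas n)
    le_rfl).aestronglyMeasurable _ (.of_forall fun ω => hbw.abs_rhat_le hn ω)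

theorem condExp_rhat (hbw : Bandwagon μ p lam r) {i : ℕ} (hi : 2 ≤ i) (hlam : lam i ≠ 0) :
    μ[rhat r lam i | ratingsAlg r (i - 1)] =ᵐ[μ] fun _ => p := by
  have := hbw.prob
  have hm := ratingsAlg_le hbw.hmeas (i - 1)
  have hpbar : Integrable ((1 - lam i) • pbar r (i - 1)) μ := (hbw.integrable_pbar _).smul _
  have hpbar_fixed : μ[(1 - lam i) • pbar r (i - 1) | ratingsAlg r (i - 1)] =
      (1 - lam i) • pbar r (i - 1) :=
    condExp_of_stronglyMeasurable hm
      ((measurable_pbar_ratingsAlg le_rfl).const_smul _).stronglyMeasurable hpbar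
  have hrhat : rhat r lam i = (lam i)⁻¹ • (r i - (1 - lam i) • pbar r (i - 1)) := by
    funext ω; simp [rhat, div_eq_inv_mul]
  rw [hrhat]
  filter_upwards [condExp_smul (μ := μ) (lam i)⁻¹ (r i - (1 - lam i) • pbar r (i - 1))
      (ratingsAlg r (i - 1)),
    condExp_sub (hbw.integrable_rating (n := i) (by omega)) hpbar (ratingsAlg r (i - 1)),
    hbw.hcond i hi] with ω h1 h2 h3
  simp only [h1, Pi.smul_apply, h2, Pi.sub_apply, h3, hpbar_fixed, smul_eq_mul]
  field_simp
  ring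

theorem integral_rhat (hbw : Bandwagon μ p lam r) {i : ℕ} (hi : 1 ≤ i) (hlam : lam i ≠ 0) :
    ∫ ω, rhat r lam i ω ∂μ = p := by
  have := hbw.prob
  rcases hi.eq_or_lt with rfl | hi
  · simpa [rhat, hbw.hlam1] using hbw.hfirst
  · rw [← integral_condExp (ratingsAlg_le hbw.hmeas (i - 1)),
      integral_congr_ae (hbw.condExp_rhat hi hlam)]
    simp

theorem integral_rhat_mul_rhat (hbw : Bandwagon μ p lam r) {i j : ℕ} (hj : 1 ≤ j)
    (hji : j < i) (hlami : lam i ≠ 0) (hlamj : lam j ≠ 0) :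
    ∫ ω, rhat r lam i ω * rhat r lam j ω ∂μ = p ^ 2 := by
  have := hbw.prob
  rw [integral_mul_eq_of_condExp_eq_const (ratingsAlg_le hbw.hmeas (i - 1))
    (hbw.integrable_rhat (by omega)) (hbw.condExp_rhat (by omega) hlami)
    (measurable_rhat_ratingsAlg lam hj (by omega)).stronglyMeasurable
    (.of_forall fun ω => hbw.abs_rhat_le hj ω), hbw.integral_rhat hj hlamj, sq]

end Bandwagon

theorem affine_uncorrelated {Ω : Type*} [MeasurableSpace Ω] (μ : MeasureTheory.Measure Ω)
    (p : ℝ) (lam : ℕ → ℝ) (r : ℕ → Ω → ℝ)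
    (hbw : Bandwagon μ p lam r)
    (hpos : ∀ i, 1 ≤ i → 0 < lam i) :
    ∀ j i, 1 ≤ j → j < i →
      (∫ ω, rhat r lam i ω * rhat r lam j ω ∂μ
          = (∫ ω, rhat r lam i ω ∂μ) * (∫ ω, rhat r lam j ω ∂μ)) ∧
      (∫ ω, rhat r lam i ω * rhat r lam j ω ∂μ = p ^ 2) := by
  intro j i hj hji
  have hlami := (hpos i (by omega)).ne'
  have hlamj := (hpos j hj).ne'
  have hcorr := hbw.integral_rhat_mul_rhat hj hji hlami hlamj
  refine ⟨?_, hcorr⟩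
  rw [hcorr, hbw.integral_rhat (by omega) hlami, hbw.integral_rhat hj hlamj, sq]
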